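/- arXiv:1702.08205 — 2 statements merged into one kernel-verified Lean document; each statement's English description precedes it below -/
import Mathlib

section
/- Let M be a {p,q}-map of radius 0 (i.e., all vertices of M are exterior) with perimeter n > 0, where p, q are positive integers with 1/p + 1/q = 1/2. Then the area of M is at most q(n − 2)/(2p). -/
open scoped Classical

/-- An abstract combinatorial model of a finite map (a finite, connected and
simply-connected 2-complex embedded in the Euclidean plane), encoded by its
oriented edges (darts), vertices and faces, the boundary cycles of its faces,
its outer boundary cycle, and Euler's formula. -/
structure PMap where
  V : Type
  E : Type
  F : Type
  [vfin : Fintype V]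
  [efin : Fintype E]
  [ffin : Fintype F]
  [vdec : DecidableEq V]
  [edec : DecidableEq E]
  [fdec : DecidableEq F]
  /-- the inverse (oppositely oriented) edge -/
  inv : E → E
  inv_inv : ∀ e, inv (inv e) = e
  inv_ne : ∀ e, inv e ≠ e
  /-- the initial vertex of an oriented edge -/
  src : E → V
  /-- the boundary path of a face: a closed nonempty edge path -/
  bFace : F → List E
  bFace_ne : ∀ f, bFace f ≠ []
  bFace_chain : ∀ f, (bFace f).Chain' fun a b => src (inv a) = src b
  bFace_closed : ∀ f, ∀ a ∈ (bFace f).head?, ∀ b ∈ (bFace f).getLast?, src (inv b) = src a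
  /-- the boundary path of the map: a closed edge path -/
  boundary : List E
  boundary_chain : boundary.Chain' fun a b => src (inv a) = src b
  boundary_closed : ∀ a ∈ boundary.head?, ∀ b ∈ boundary.getLast?, src (inv b) = src a
  /-- every oriented edge occurs exactly once: either in the boundary cycle of
  exactly one face, or in the outer boundary cycle of the map -/
  dart_partition : ∀ e : E, boundary.count e + ∑ f : F, (bFace f).count e = 1
  /-- Euler's formula `V - E + F = 1` (each non-oriented edge is a pair of darts) -/
  euler : 2 * Fintype.card V + 2 * Fintype.card F = Fintype.card E + 2

attribute [instance] PMap.vfin PMap.efin PMap.ffin PMap.vdec PMap.edec PMap.fdec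

namespace PMap

variable (M : PMap)

/-- The terminal vertex of an oriented edge. -/
def tgt (e : M.E) : M.V := M.src (M.inv e)

/-- The degree of a vertex: the number of oriented edges starting at it. -/
def vdeg (o : M.V) : ℕ := (Finset.univ.filter fun e : M.E => M.src e = o).card

/-- The degree of a face: the length of its boundary path. -/
def fdeg (f : M.F) : ℕ := (M.bFace f).length

/-- The perimeter of the map: the length of its boundary path. -/
def perimeter : ℕ := M.boundary.length

/-- The area of the map: the number of its faces. -/
def area : ℕ := Fintype.card M.F

/-- The multiplicity of a vertex: the number of times the boundary path of the
map passes through it. -/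
def mult (o : M.V) : ℕ := (M.boundary.map M.src).count o

/-- The exterior vertices: the vertices of the boundary path. -/
def extVerts : Finset M.V := (M.boundary.map M.src).toFinset

/-- A vertex is exterior if it lies on the boundary path; otherwise interior. -/
def IsExtV (o : M.V) : Prop := o ∈ M.extVerts

/-- An edge is exterior if it belongs to the boundary path of the map. -/
def IsExtEdge (e : M.E) : Prop := e ∈ M.boundary ∨ M.inv e ∈ M.boundary

/-- A face is exterior if its boundary shares an edge with the boundary of the map. -/
def IsExtFace (f : M.F) : Prop := ∃ e ∈ M.bFace f, M.IsExtEdge e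

/-- A face is weakly exterior if it shares a vertex with the boundary of the map. -/
def IsWeaklyExtFace (f : M.F) : Prop := ∃ e ∈ M.bFace f, M.src e ∈ M.extVerts

/-- A face is strongly interior if it shares no vertex with the boundary of the map. -/
def StronglyInterior (f : M.F) : Prop := ¬ M.IsWeaklyExtFace f

/-- A `(p,q)`-map: every interior face has degree at least `p` and every
interior vertex has degree at least `q`. -/
def IsPQ (p q : ℕ) : Prop :=
  (∀ f, ¬ M.IsExtFace f → p ≤ M.fdeg f) ∧ (∀ o, ¬ M.IsExtV o → q ≤ M.vdeg o)

/-- A `{p,q}`-map: a `(p,q)`-map in which every face has degree at least `p`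
and less than `2p`, and every vertex has degree less than `2q`. -/
def IsBracePQ (p q : ℕ) : Prop :=
  M.IsPQ p q ∧ (∀ f, p ≤ M.fdeg f ∧ M.fdeg f < 2 * p) ∧ (∀ o, M.vdeg o < 2 * q)

/-- The map is simple if its boundary path is a simple closed curve. -/
def IsSimple : Prop := (M.boundary.map M.src).Nodup

/-- The `1`-skeleton of the map, as a simple graph. -/
def skel : SimpleGraph M.V where
  Adj u v := u ≠ v ∧ ∃ e, M.src e = u ∧ M.tgt e = v
  symm := by
    constructor
    rintro u v ⟨huv, e, h1, h2⟩
    refine ⟨huv.symm, M.inv e, h2, ?_⟩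
    show M.src (M.inv (M.inv e)) = u
    rw [M.inv_inv]; exact h1
  loopless := by constructor; rintro u ⟨h, -⟩; exact h rfl

/-- The combinatorial path metric on the 1-skeleton. -/
noncomputable def dist (u v : M.V) : ℕ := M.skel.dist u v

/-- The distance from a vertex to the boundary of the map. -/
noncomputable def distToBoundary (o : M.V) : ℕ :=
  sInf {d | ∃ b, M.IsExtV b ∧ M.dist o b = d}

/-- The radius of the map: the maximal distance from a vertex to the boundary. -/
noncomputable def radius : ℕ := sSup {d | ∃ o, M.distToBoundary o = d}

/-- The `(p,q)`-curvature `p - d(Π)` of a face. -/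
noncomputable def faceCurv (p : ℝ) (f : M.F) : ℝ := p - M.fdeg f

/-- The `(p,q)`-curvature `(p/q)(q - d(o)) - μ(o)` of a vertex. -/
noncomputable def vertCurv (p q : ℝ) (o : M.V) : ℝ :=
  p / q * (q - M.vdeg o) - M.mult o

/-- A flat map (submap) of curvature type `(p,q)`: every face has degree
exactly `p` and every interior vertex has degree exactly `q`. -/
def IsFlat (p q : ℕ) : Prop :=
  (∀ f, M.fdeg f = p) ∧ (∀ o, ¬ M.IsExtV o → M.vdeg o = q)

end PMap

/-- An inclusion of a map `N` into a map `M` as a submap. -/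
structure SubmapIncl (N M : PMap) where
  vMap : N.V → M.V
  eMap : N.E → M.E
  fMap : N.F → M.F
  vInj : Function.Injective vMap
  eInj : Function.Injective eMap
  fInj : Function.Injective fMap
  src_comm : ∀ e, M.src (eMap e) = vMap (N.src e)
  inv_comm : ∀ e, M.inv (eMap e) = eMap (N.inv e)
  face_comm : ∀ f, M.bFace (fMap f) = (N.bFace f).map eMap


private theorem sum_count_len {α : Type} [Fintype α] [DecidableEq α] (l : List α) :
    ∑ a : α, l.count a = l.length := by
  have h := Multiset.toFinset_sum_count_eq (l : Multiset α)
  simp only [Multiset.coe_count, Multiset.coe_card] at h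
  rw [← h]
  refine (Finset.sum_subset (Finset.subset_univ _) ?_).symm
  intro x _ hx
  rw [List.count_eq_zero]
  simpa [Multiset.mem_toFinset] using hx

/-- Let `M` be a `{p,q}`-map of radius `0` (i.e., all vertices
of `M` are exterior) with perimeter `n > 0`, where `p, q` are positive integers
with `1/p + 1/q = 1/2`.  Then the area of `M` is at most `q(n − 2)/(2p)`. -/
theorem area_of_radius_zero (p q : ℕ) (hp : 0 < p) (hq : 0 < q)
    (hpq : 1 / (p : ℝ) + 1 / (q : ℝ) = 1 / 2)
    (M : PMap) (hM : M.IsBracePQ p q)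
    (hrad : ∀ o : M.V, M.IsExtV o) (hn : 0 < M.perimeter) :
    (M.area : ℝ) ≤ (q : ℝ) * ((M.perimeter : ℝ) - 2) / (2 * p) := by
  classical
  -- edge count: darts = boundary darts + face-boundary darts
  have hE : Fintype.card M.E = M.perimeter + ∑ f : M.F, M.fdeg f := by
    calc Fintype.card M.E = ∑ _e : M.E, 1 := by simp
      _ = ∑ e : M.E, (M.boundary.count e + ∑ f : M.F, (M.bFace f).count e) :=
          Finset.sum_congr rfl fun e _ => (M.dart_partition e).symm
      _ = (∑ e : M.E, M.boundary.count e) + ∑ e : M.E, ∑ f : M.F, (M.bFace f).count e :=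
          Finset.sum_add_distrib
      _ = M.perimeter + ∑ f : M.F, M.fdeg f := by
          rw [sum_count_len, Finset.sum_comm]
          refine congrArg _ (Finset.sum_congr rfl fun f _ => ?_)
          exact sum_count_len _
  -- vertex count: all vertices are on the boundary
  have hV : Fintype.card M.V ≤ M.perimeter := by
    have h1 : (Finset.univ : Finset M.V).card ≤ M.extVerts.card :=
      Finset.card_le_card fun o _ => hrad o
    have h2 : M.extVerts.card ≤ (M.boundary.map M.src).length := List.toFinset_card_le _
    rw [List.length_map] at h2
    calc Fintype.card M.V = (Finset.univ : Finset M.V).card := (Finset.card_univ).symm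
      _ ≤ M.extVerts.card := h1
      _ ≤ M.boundary.length := h2
  -- face degrees are at least p
  have hF : M.area * p ≤ ∑ f : M.F, M.fdeg f := by
    have h := Finset.sum_le_sum (s := (Finset.univ : Finset M.F))
      (fun f _ => (hM.2.1 f).1)
    simpa [PMap.area, Finset.sum_const, Finset.card_univ, smul_eq_mul] using h
  have heuler := M.euler
  have hA : Fintype.card M.F = M.area := rfl
  rw [hA] at heuler
  -- key combinatorial inequality
  have key : M.area * p + 2 ≤ M.perimeter + 2 * M.area := by
    have h1 : M.perimeter + (M.area * p) + 2 ≤ M.perimeter + (∑ f : M.F, M.fdeg f) + 2 := by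
      omega
    rw [← hE] at h1
    omega
  -- now pass to the reals
  set P : ℝ := (p : ℝ) with hP
  set Q : ℝ := (q : ℝ) with hQ
  set A : ℝ := (M.area : ℝ) with hAr
  set n : ℝ := (M.perimeter : ℝ) with hnr
  have hP0 : (0:ℝ) < P := by rw [hP]; exact_mod_cast hp
  have hQ0 : (0:ℝ) < Q := by rw [hQ]; exact_mod_cast hq
  have keyR : A * P + 2 ≤ n + 2 * A := by rw [hAr, hP, hnr]; exact_mod_cast key
  have h2 : Q * (P - 2) = 2 * P := by
    field_simp at hpq
    nlinarith [hpq]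
  have hP2 : 0 < P - 2 := by nlinarith
  have h1 : A * (P - 2) ≤ n - 2 := by nlinarith
  rw [le_div_iff₀ (by positivity)]
  calc A * (2 * P) = Q * (A * (P - 2)) := by rw [← h2]; ring
    _ ≤ Q * (n - 2) := mul_le_mul_of_nonneg_left h1 hQ0.le
end

section
/- Let M be a {p,q}-map, where p, q are positive integers with 1/p + 1/q = 1/2. Then the sum I_v^b of the (p,q)-curvatures of the exterior vertices of M satisfies I_v^b ≥ p. -/
open scoped Classical

private lemma sum_count_univ' {α : Type*} [Fintype α] [DecidableEq α] (l : List α) :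
    ∑ a : α, l.count a = l.length := by
  induction l with
  | nil => simp
  | cons x xs ih => simp [List.count_cons, Finset.sum_add_distrib, ih]

/-- Let `M` be a `{p,q}`-map, where `p, q` are positive
integers with `1/p + 1/q = 1/2`.  Then the sum `I_v^b` of the
`(p,q)`-curvatures of the exterior vertices of `M` satisfies `I_v^b ≥ p`. -/
theorem exterior_curvature_ge (p q : ℕ) (hp : 0 < p) (hq : 0 < q)
    (hpq : 1 / (p : ℝ) + 1 / (q : ℝ) = 1 / 2)
    (M : PMap) (hM : M.IsBracePQ p q) :
    (p : ℝ) ≤ ∑ o ∈ M.extVerts, M.vertCurv p q o := by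
  obtain ⟨⟨hfint, hvint⟩, hfdeg, hvdeg⟩ := hM
  have hp0 : (0:ℝ) < p := by exact_mod_cast hp
  have hq0 : (0:ℝ) < q := by exact_mod_cast hq
  have hp' : (p:ℝ) ≠ 0 := ne_of_gt hp0
  have hq' : (q:ℝ) ≠ 0 := ne_of_gt hq0
  -- total degree of vertices = number of darts
  have hsumdeg : ∑ o : M.V, M.vdeg o = Fintype.card M.E := by
    rw [← Finset.card_univ (α := M.E)]
    exact (Finset.card_eq_sum_card_fiberwise (f := M.src)
      (fun x _ => Finset.mem_univ _)).symm
  -- total multiplicity = perimeter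
  have hsummult : ∑ o : M.V, M.mult o = M.perimeter := by
    have := sum_count_univ' (M.boundary.map M.src)
    simpa [PMap.mult, PMap.perimeter] using this
  -- darts partition: perimeter + total face degree = number of darts
  have hsumf : M.perimeter + ∑ f : M.F, M.fdeg f = Fintype.card M.E := by
    have h : ∑ e : M.E, (M.boundary.count e + ∑ f : M.F, (M.bFace f).count e)
        = ∑ _e : M.E, 1 := Finset.sum_congr rfl fun e _ => M.dart_partition e
    rw [Finset.sum_add_distrib, sum_count_univ', Finset.sum_comm] at h
    simp only [sum_count_univ'] at h
    simpa [PMap.perimeter, PMap.fdeg] using h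
  have hmult0 : ∀ o : M.V, o ∉ M.extVerts → M.mult o = 0 := by
    intro o ho
    simpa [PMap.mult] using
      (List.count_eq_zero.2 (fun h => ho (List.mem_toFinset.2 h)))
  have hVd : (∑ o : M.V, (M.vdeg o : ℝ)) = (Fintype.card M.E : ℝ) := by
    exact_mod_cast congrArg (Nat.cast : ℕ → ℝ) hsumdeg
  have hVm : (∑ o : M.V, (M.mult o : ℝ)) = (M.perimeter : ℝ) := by
    exact_mod_cast congrArg (Nat.cast : ℕ → ℝ) hsummult
  have hSf : (∑ f : M.F, (M.fdeg f : ℝ))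
      = (Fintype.card M.E : ℝ) - M.perimeter := by
    have h := congrArg (Nat.cast : ℕ → ℝ) hsumf
    push_cast at h
    linarith
  have heuler : 2 * (Fintype.card M.V : ℝ) + 2 * (Fintype.card M.F : ℝ)
      = (Fintype.card M.E : ℝ) + 2 := by exact_mod_cast M.euler
  have hpq2 : 2 * (q:ℝ) + 2 * (p:ℝ) = (p:ℝ) * q := by
    field_simp at hpq
    linarith
  -- Gauss–Bonnet identity: total curvature is exactly p
  have e1 : ∑ o : M.V, M.vertCurv p q o
      = (p:ℝ)/q * ((q:ℝ) * (Fintype.card M.V) - (Fintype.card M.E))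
        - M.perimeter := by
    simp only [PMap.vertCurv]
    rw [Finset.sum_sub_distrib, ← Finset.mul_sum, Finset.sum_sub_distrib,
      Finset.sum_const, Finset.card_univ, nsmul_eq_mul, hVd, hVm]
    ring
  have e2 : ∑ f : M.F, M.faceCurv p f
      = (Fintype.card M.F : ℝ) * p - ∑ f : M.F, (M.fdeg f : ℝ) := by
    simp only [PMap.faceCurv]
    rw [Finset.sum_sub_distrib, Finset.sum_const, Finset.card_univ, nsmul_eq_mul]
  have hkey : ∑ o : M.V, M.vertCurv p q o + ∑ f : M.F, M.faceCurv p f = p := by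
    rw [e1, e2]
    have h3 : (p:ℝ) / q = (p:ℝ) / 2 - 1 := by
      rw [div_eq_iff hq']; linarith
    rw [h3]
    linear_combination ((p:ℝ)/2) * heuler
      - ((Fintype.card M.V : ℝ)/2) * hpq2 - hSf
  -- faces have nonpositive curvature
  have hface : ∑ f : M.F, M.faceCurv p f ≤ 0 := by
    refine Finset.sum_nonpos fun f _ => ?_
    have h1 : (p:ℝ) ≤ M.fdeg f := by exact_mod_cast (hfdeg f).1
    simp only [PMap.faceCurv]
    linarith
  -- interior vertices have nonpositive curvature
  have hint : ∀ o : M.V, o ∉ M.extVerts → M.vertCurv p q o ≤ 0 := by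
    intro o ho
    have hd' : (q:ℝ) ≤ M.vdeg o := by exact_mod_cast hvint o ho
    have hm : M.mult o = 0 := hmult0 o ho
    simp only [PMap.vertCurv, hm, Nat.cast_zero, sub_zero]
    have hr : (0:ℝ) ≤ (p:ℝ) / q := by positivity
    have : (q:ℝ) - M.vdeg o ≤ 0 := by linarith
    exact mul_nonpos_of_nonneg_of_nonpos hr this
  have hsplit : ∑ o ∈ M.extVerts, M.vertCurv p q o
      + ∑ o ∈ M.extVertsᶜ, M.vertCurv p q o = ∑ o : M.V, M.vertCurv p q o :=
    Finset.sum_add_sum_compl _ _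
  have hcompl : ∑ o ∈ M.extVertsᶜ, M.vertCurv p q o ≤ 0 :=
    Finset.sum_nonpos fun o ho => hint o (Finset.mem_compl.1 ho)
  linarith
end
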